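/- arXiv:2005.12665 — 2 statements merged into one kernel-verified Lean document; each statement's English description precedes it below -/
import Mathlib

section
/- Let H be a complex Hilbert space and let G be a subgroup of the group of unitary operators (linear isometric bijections) of H. Assume G is a dislocation group, i.e., for every sequence (g_n) in G for which it is NOT the case that ⟨g_n x, y⟩ → 0 for all x, y ∈ H, there exist a strictly increasing sequence of indices (n_k) and an element g ∈ G such that ‖g_{n_k} x − g x‖ → 0 for every x ∈ H. Equip the set H/G of orbits of the natural action of G on H with the quotient topology and let P : H → H/G denote the canonical projection. Then for every compact subset K̃ of H/G there exists a compact subset K of H with P(K) = K̃. -/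
/-!
A dislocation group has closed orbits: if `gₙ x → y ≠ 0` then `⟪gₙ x, y⟫ → ‖y‖² ≠ 0`, so a
subsequence of `gₙ` converges strongly to some `h ∈ G`, and `y = h x`.

For a group acting isometrically on a complete metric space with closed orbits, the quotient is
Hausdorff and `infDist x (orbit G y)` is an invariant pseudometric on orbits. Given a compact `K̃`
in the quotient, take finite `2⁻ⁿ`-nets `Tₙ` of `K̃` and lift them coherently: `Fₙ₊₁` consists of
one point in the orbit of each `t ∈ Tₙ₊₁` lying within `2 · 2⁻ⁿ` of a point of `Fₙ`. Then `⋃ Fₙ`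
is totally bounded, so its closure `C` is compact; every orbit over `K̃` comes arbitrarily close to
`C`, hence meets it, and `C ∩ P⁻¹ K̃` is the required lift.
-/

open Filter Topology Metric MulAction Set

instance LinearIsometryEquiv.applyMulAction {R E : Type*} [Semiring R]
    [SeminormedAddCommGroup E] [Module R E] : MulAction (E ≃ₗᵢ[R] E) E where
  smul f x := f x
  one_smul _ := rfl
  mul_smul _ _ _ := rfl

instance LinearIsometryEquiv.isIsometricSMul {R E : Type*} [Semiring R]
    [SeminormedAddCommGroup E] [Module R E] : IsIsometricSMul (E ≃ₗᵢ[R] E) E :=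
  ⟨fun f => f.isometry⟩

instance Subgroup.isIsometricSMul {M X : Type*} [Group M] [PseudoEMetricSpace X] [MulAction M X]
    [IsIsometricSMul M X] (S : Subgroup M) : IsIsometricSMul S X :=
  ⟨fun g => isometry_smul X (g : M)⟩

theorem IsCompact.inter_nonempty_of_forall_exists_dist_lt {X : Type*} [PseudoMetricSpace X]
    {C S : Set X} (hC : IsCompact C) (hS : IsClosed S)
    (h : ∀ ε > 0, ∃ x ∈ C, ∃ y ∈ S, dist x y < ε) : (C ∩ S).Nonempty := by
  rw [← not_disjoint_iff_nonempty_inter]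
  intro hCS
  obtain ⟨δ, hδ, hdisj⟩ := hCS.exists_thickenings hC hS
  obtain ⟨x, hx, y, hy, hxy⟩ := h δ hδ
  refine disjoint_left.mp hdisj ?_ (self_subset_thickening hδ S hy)
  exact mem_thickening_iff.mpr ⟨x, hx, by rwa [dist_comm]⟩

theorem totallyBounded_iUnion_of_forall_exists_dist_lt {X : Type*} [PseudoMetricSpace X]
    {F : ℕ → Set X} (hF : ∀ n, (F n).Finite) {r : ℕ → ℝ} (hr0 : ∀ n, 0 ≤ r n) (hr : Summable r)
    (hstep : ∀ n, ∀ y ∈ F (n + 1), ∃ x ∈ F n, dist y x < r n) :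
    TotallyBounded (⋃ n, F n) := by
  have hchain : ∀ n j, ∀ y ∈ F (n + j), ∃ x ∈ F n, dist y x ≤ ∑ k ∈ Finset.range j, r (k + n) := by
    intro n j
    induction j with
    | zero => exact fun y hy => ⟨y, hy, by simp⟩
    | succ j ih =>
      intro y hy
      obtain ⟨z, hz, hyz⟩ := hstep (n + j) y hy
      obtain ⟨x, hx, hzx⟩ := ih z hz
      refine ⟨x, hx, ?_⟩
      rw [Finset.sum_range_succ, add_comm j n]
      linarith [dist_triangle y z x]
  rw [totallyBounded_iff]
  intro ε hε
  obtain ⟨n, hn⟩ := ((tendsto_sum_nat_add r).eventually (gt_mem_nhds hε)).exists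
  refine ⟨⋃ m ∈ Finset.range (n + 1), F m, (Finset.finite_toSet _).biUnion fun m _ => hF m, ?_⟩
  intro y hy
  obtain ⟨m, hym⟩ := mem_iUnion.mp hy
  rcases le_total m n with hmn | hnm
  · exact mem_biUnion (mem_biUnion (Finset.mem_range.mpr (Nat.lt_succ_of_le hmn)) hym)
      (mem_ball_self hε)
  · obtain ⟨j, rfl⟩ := Nat.exists_eq_add_of_le hnm
    obtain ⟨x, hx, hyx⟩ := hchain n j y hym
    refine mem_biUnion (mem_biUnion (Finset.mem_range.mpr n.lt_succ_self) hx) ?_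
    calc dist y x ≤ ∑ k ∈ Finset.range j, r (k + n) := hyx
      _ ≤ ∑' k, r (k + n) :=
        Summable.sum_le_tsum _ (fun k _ => hr0 _) ((summable_nat_add_iff n).mpr hr)
      _ < ε := hn

section OrbitDistance

variable {G X : Type*} [Group G] [PseudoMetricSpace X] [MulAction G X]

theorem exists_finset_orbit_refinement (F T : Finset X) (r : ℝ) :
    ∃ F' : Finset X, (∀ y ∈ F', ∃ x ∈ F, dist y x < r) ∧
      ∀ x ∈ F, ∀ t ∈ T, infDist x (orbit G t) < r → ∃ y ∈ F', y ∈ orbit G t := by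
  classical
  have hlift : ∀ x t : X, ∃ y ∈ orbit G t, infDist x (orbit G t) < r → dist y x < r := by
    intro x t
    by_cases h : infDist x (orbit G t) < r
    · obtain ⟨y, hy, hxy⟩ := (infDist_lt_iff ⟨t, mem_orbit_self t⟩).mp h
      exact ⟨y, hy, fun _ => by rwa [dist_comm]⟩
    · exact ⟨t, mem_orbit_self t, fun h' => absurd h' h⟩
  choose lift hlift_mem hlift_dist using hlift
  refine ⟨((F ×ˢ T).filter fun p => infDist p.1 (orbit G p.2) < r).image fun p => lift p.1 p.2,
    ?_, ?_⟩
  · simp only [Finset.mem_image, Finset.mem_filter, Finset.mem_product]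
    rintro _ ⟨⟨x, t⟩, ⟨⟨hx, -⟩, hr⟩, rfl⟩
    exact ⟨x, hx, hlift_dist x t hr⟩
  · intro x hx t ht hr
    refine ⟨lift x t, Finset.mem_image.mpr ⟨(x, t), ?_, rfl⟩, hlift_mem x t⟩
    exact Finset.mem_filter.mpr ⟨Finset.mem_product.mpr ⟨hx, ht⟩, hr⟩

variable [IsIsometricSMul G X]

theorem infDist_smul_orbit (g : G) (x y : X) :
    infDist (g • x) (orbit G y) = infDist x (orbit G y) := by
  have h := infDist_image (x := x) (t := orbit G y) (isometry_smul X g)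
  rwa [image_smul, smul_orbit] at h

theorem infDist_orbit_comm (x y : X) : infDist x (orbit G y) = infDist y (orbit G x) := by
  suffices h : ∀ x y : X, infDist x (orbit G y) ≤ infDist y (orbit G x) from
    le_antisymm (h x y) (h y x)
  intro x y
  refine le_of_forall_gt fun c hc => ?_
  obtain ⟨z, ⟨g, rfl⟩, hz⟩ := (infDist_lt_iff ⟨x, mem_orbit_self x⟩).mp hc
  refine (infDist_le_dist_of_mem (mem_orbit y g⁻¹)).trans_lt ?_
  rwa [← dist_smul g, smul_inv_smul, dist_comm]

theorem infDist_orbit_le_add (x y z : X) :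
    infDist x (orbit G z) ≤ infDist x (orbit G y) + infDist y (orbit G z) := by
  refine le_of_forall_pos_lt_add fun ε hε => ?_
  obtain ⟨_, ⟨g, rfl⟩, hg⟩ := (infDist_lt_iff ⟨y, mem_orbit_self y⟩).mp
    (lt_add_of_pos_right (infDist x (orbit G y)) hε)
  calc infDist x (orbit G z) ≤ infDist (g • y) (orbit G z) + dist x (g • y) :=
        infDist_le_infDist_add_dist
    _ < infDist x (orbit G y) + infDist y (orbit G z) + ε := by
        rw [infDist_smul_orbit]; linarith

theorem continuous_infDist_orbit : Continuous fun p : X × X => infDist p.1 (orbit G p.2) := by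
  refine (LipschitzWith.uncurry (f := fun x y : X => infDist x (orbit G y)) (Kβ := 1)
    (fun y => lipschitz_infDist_pt _) (fun x => ?_)).continuous
  simpa only [infDist_orbit_comm x] using lipschitz_infDist_pt (orbit G x)

theorem t2Space_orbitRel_quotient_of_isClosed_orbit (hG : ∀ x : X, IsClosed (orbit G x)) :
    T2Space (orbitRel.Quotient G X) := by
  rw [t2Space_iff_of_isOpenQuotientMap isOpenQuotientMap_quotientMk]
  have hdiag : {q : X × X | Quotient.mk (orbitRel G X) q.1 = Quotient.mk _ q.2} =
      (fun p : X × X => infDist p.1 (orbit G p.2)) ⁻¹' {0} := by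
    ext ⟨x, y⟩
    simp [Quotient.eq, orbitRel_apply, (hG y).mem_iff_infDist_zero ⟨y, mem_orbit_self y⟩]
  rw [hdiag]
  exact isClosed_singleton.preimage continuous_infDist_orbit

theorem IsCompact.exists_finset_infDist_orbit_lt {K : Set (orbitRel.Quotient G X)}
    (hK : IsCompact K) {ε : ℝ} (hε : 0 < ε) :
    ∃ T : Finset X, ∀ p, Quotient.mk _ p ∈ K → ∃ t ∈ T, infDist t (orbit G p) < ε := by
  obtain ⟨T, hT⟩ := hK.elim_finite_subcover (fun t : X => Quotient.mk (orbitRel G X) '' ball t ε)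
    (fun t => isOpenMap_quotient_mk'_mul _ isOpen_ball)
    (fun q _ => q.inductionOn fun p => mem_iUnion.mpr ⟨p, p, mem_ball_self hε, rfl⟩)
  refine ⟨T, fun p hp => ?_⟩
  obtain ⟨t, ht, z, hz, hzp⟩ := mem_iUnion₂.mp (hT hp)
  refine ⟨t, ht, (infDist_le_dist_of_mem ?_).trans_lt (mem_ball'.mp hz)⟩
  exact orbitRel_apply.mp (Quotient.eq.mp hzp)

theorem IsCompact.exists_isCompact_forall_exists_dist_orbit_lt [CompleteSpace X]
    {K : Set (orbitRel.Quotient G X)} (hK : IsCompact K) :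
    ∃ C : Set X, IsCompact C ∧
      ∀ p, Quotient.mk _ p ∈ K → ∀ ε > 0, ∃ x ∈ C, ∃ y ∈ orbit G p, dist x y < ε := by
  let e : ℕ → ℝ := fun n => (1 / 2) ^ n
  choose T hT using fun n => hK.exists_finset_infDist_orbit_lt (pow_pos one_half_pos n)
  choose next hnext_dist hnext_orbit using exists_finset_orbit_refinement (G := G) (X := X)
  obtain ⟨F, hF0, hF_succ⟩ : ∃ F : ℕ → Finset X,
      F 0 = T 0 ∧ ∀ n, F (n + 1) = next (F n) (T (n + 1)) (2 * e n) :=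
    ⟨fun n => Nat.rec (T 0) (fun n Fn => next Fn (T (n + 1)) (2 * e n)) n, rfl, fun _ => rfl⟩
  have hnet : ∀ n p, Quotient.mk _ p ∈ K → ∃ x ∈ F n, infDist x (orbit G p) < e n := by
    intro n p hp
    induction n with
    | zero => rw [hF0]; exact hT 0 p hp
    | succ n ih =>
      obtain ⟨x, hx, hxp⟩ := ih
      obtain ⟨t, ht, htp⟩ := hT (n + 1) p hp
      have hxt : infDist x (orbit G t) < 2 * e n :=
        calc infDist x (orbit G t) ≤ infDist x (orbit G p) + infDist p (orbit G t) :=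
              infDist_orbit_le_add x p t
          _ < e n + e (n + 1) := by rw [infDist_orbit_comm p t]; exact add_lt_add hxp htp
          _ ≤ 2 * e n := by simp only [e, pow_succ]; linarith [pow_pos (one_half_pos (α := ℝ)) n]
      obtain ⟨_, hy, g, rfl⟩ := hnext_orbit _ _ _ x hx t ht hxt
      exact ⟨_, hF_succ n ▸ hy, by rwa [infDist_smul_orbit]⟩
  have hTB : TotallyBounded (⋃ n, (F n : Set X)) := by
    refine totallyBounded_iUnion_of_forall_exists_dist_lt (fun n => (F n).finite_toSet)
      (r := fun n => 2 * e n) (fun n => by positivity) (summable_geometric_two.mul_left 2) ?_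
    intro n y hy
    rw [Finset.mem_coe, hF_succ] at hy
    exact hnext_dist _ _ _ y hy
  refine ⟨closure (⋃ n, (F n : Set X)), hTB.closure.isCompact_of_isClosed isClosed_closure,
    fun p hp ε hε => ?_⟩
  obtain ⟨n, hn⟩ := exists_pow_lt_of_lt_one hε one_half_lt_one
  obtain ⟨x, hx, hxp⟩ := hnet n p hp
  obtain ⟨y, hy, hxy⟩ := (infDist_lt_iff ⟨p, mem_orbit_self p⟩).mp (hxp.trans hn)
  exact ⟨x, subset_closure (mem_iUnion_of_mem n hx), y, hy, hxy⟩

theorem IsCompact.exists_isCompact_image_quotient_mk_eq [CompleteSpace X]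
    (hG : ∀ x : X, IsClosed (orbit G x)) {K : Set (orbitRel.Quotient G X)} (hK : IsCompact K) :
    ∃ L : Set X, IsCompact L ∧ Quotient.mk _ '' L = K := by
  have := t2Space_orbitRel_quotient_of_isClosed_orbit hG
  obtain ⟨C, hC, hCK⟩ := hK.exists_isCompact_forall_exists_dist_orbit_lt
  refine ⟨C ∩ Quotient.mk _ ⁻¹' K, hC.inter_right (hK.isClosed.preimage continuous_quotient_mk'),
    ?_⟩
  rw [image_inter_preimage, inter_eq_right]
  intro q hq
  induction q using Quotient.inductionOn with
  | h p =>
    obtain ⟨x, hxC, hxp⟩ := hC.inter_nonempty_of_forall_exists_dist_lt (hG p) (hCK p hq)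
    exact ⟨x, hxC, Quotient.sound (orbitRel_apply.mpr hxp)⟩

end OrbitDistance

section Dislocation

variable {𝕜 E : Type*} [RCLike 𝕜] [NormedAddCommGroup E] [InnerProductSpace 𝕜 E]

def Subgroup.IsDislocation (G : Subgroup (E ≃ₗᵢ[𝕜] E)) : Prop :=
  ∀ g : ℕ → G,
    ¬ (∀ x y : E, Tendsto (fun n => inner 𝕜 ((g n : E ≃ₗᵢ[𝕜] E) x) y) atTop (𝓝 0)) →
    ∃ φ : ℕ → ℕ, StrictMono φ ∧ ∃ h : G,
      ∀ x : E, Tendsto (fun k => ‖(g (φ k) : E ≃ₗᵢ[𝕜] E) x - (h : E ≃ₗᵢ[𝕜] E) x‖) atTop (𝓝 0)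

theorem Subgroup.IsDislocation.isClosed_orbit {G : Subgroup (E ≃ₗᵢ[𝕜] E)} (hG : G.IsDislocation)
    (x : E) : IsClosed (orbit G x) := by
  refine isClosed_of_closure_subset fun y hy => ?_
  obtain ⟨u, hu, hlim⟩ := mem_closure_iff_seq_limit.mp hy
  choose g hg using hu
  obtain rfl : u = fun n => (g n : E ≃ₗᵢ[𝕜] E) x := funext fun n => (hg n).symm
  by_cases hy0 : y = 0
  · have hx : ‖x‖ = ‖y‖ := by
      have hnorm := hlim.norm
      simp only [LinearIsometryEquiv.norm_map] at hnorm
      exact tendsto_nhds_unique tendsto_const_nhds hnorm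
    rw [hy0, norm_zero, norm_eq_zero] at hx
    rw [hy0, ← hx]
    exact mem_orbit_self x
  · have hweak : ¬ ∀ a b : E,
        Tendsto (fun n => inner 𝕜 ((g n : E ≃ₗᵢ[𝕜] E) a) b) atTop (𝓝 0) := fun h =>
      hy0 (inner_self_eq_zero.mp (tendsto_nhds_unique (hlim.inner tendsto_const_nhds) (h x y)))
    obtain ⟨φ, hφ, h, hh⟩ := hG g hweak
    exact ⟨h, tendsto_nhds_unique (tendsto_iff_norm_sub_tendsto_zero.mpr (hh x))
      (hlim.comp hφ.tendsto_atTop)⟩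

end Dislocation

/-- **Theorem.** If `G` is a dislocation group of unitary operators on a complex Hilbert
space `H`, then every compact subset of the orbit space `H/G` (with the quotient topology)
is the image under the canonical projection of a compact subset of `H`. -/
theorem dislocation_compact_lift
    (H : Type*) [NormedAddCommGroup H] [InnerProductSpace ℂ H] [CompleteSpace H]
    (G : Subgroup (H ≃ₗᵢ[ℂ] H))
    -- dislocation hypothesis
    (hdis : ∀ g : ℕ → G,
      ¬ (∀ x y : H, Tendsto (fun n => (inner ℂ ((g n : H ≃ₗᵢ[ℂ] H) x) y : ℂ)) atTop (𝓝 0)) →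
      ∃ φ : ℕ → ℕ, StrictMono φ ∧ ∃ h : G,
        ∀ x : H, Tendsto (fun k => ‖(g (φ k) : H ≃ₗᵢ[ℂ] H) x - (h : H ≃ₗᵢ[ℂ] H) x‖)
          atTop (𝓝 0)) :
    ∀ Kq : Set (Quot (fun x y : H => ∃ g : G, (g : H ≃ₗᵢ[ℂ] H) y = x)),
      IsCompact Kq →
      ∃ K : Set H, IsCompact K ∧
        Quot.mk (fun x y : H => ∃ g : G, (g : H ≃ₗᵢ[ℂ] H) y = x) '' K = Kq := by
  intro Kq hKq
  -- the `Quot` of the statement is `orbitRel.Quotient G H` by definition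
  exact hKq.exists_isCompact_image_quotient_mk_eq
    (Subgroup.IsDislocation.isClosed_orbit (G := G) hdis)
end

section
/- Let d ≥ 1, let t ∈ ℝ with t ≠ 0, and let f ∈ 𝓢(ℝ^d). Then the dispersive estimate holds: sup_{x ∈ ℝ^d} |𝓕^{−1}(ξ ↦ e^{−4π²it|ξ|²} 𝓕f(ξ))(x)| ≤ (4π|t|)^{−d/2} ∫_{ℝ^d} |f(y)| dy; that is, ‖e^{itΔ}f‖_{L^∞(ℝ^d)} ≤ (4π|t|)^{−d/2} ‖f‖_{L¹(ℝ^d)}. -/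
open MeasureTheory Real Complex SchwartzMap
open scoped FourierTransform

noncomputable section

/-- Euclidean space `ℝ^d`. -/
abbrev Ed (d : ℕ) := EuclideanSpace ℝ (Fin d)

/-- Free Schrödinger propagator `e^{itΔ}f = 𝓕⁻¹ (e^{-4π²it|ξ|²} 𝓕 f)`. -/
def freeProp {d : ℕ} (t : ℝ) (f : Ed d → ℂ) : Ed d → ℂ :=
  FourierTransformInv.fourierInv
    (fun ξ : Ed d => Complex.exp ((-(4 * π ^ 2 * t * ‖ξ‖ ^ 2) : ℝ) * Complex.I) *
      FourierTransform.fourier f ξ)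

open Filter Topology
open scoped RealInnerProductSpace

/-!
For `Re b > 0` the Gaussian wave `g_b(ξ) = exp (-b‖ξ‖² + 2πi⟪x, ξ⟫)` is integrable, so the
multiplication formula `∫ 𝓕f · g_b = ∫ f · 𝓕g_b` moves the Fourier transform onto it, and
`𝓕g_b(y) = (π / b)^{d/2} exp (-π²‖x - y‖² / b)` has modulus at most `(π / |b|)^{d/2}`.
Since `𝓕f ∈ L¹`, dominated convergence lets `b` tend to a point of the imaginary axis;
`e^{itΔ}f(x)` is the value at `b = 4π²it`, where `π / |b| = (4π|t|)⁻¹`.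
-/

section GaussianWave

variable {V : Type*} [NormedAddCommGroup V] [InnerProductSpace ℝ V]

def gaussianWave (b : ℂ) (x ξ : V) : ℂ := cexp (-b * ‖ξ‖ ^ 2 + 2 * π * I * ⟪x, ξ⟫)

theorem norm_gaussianWave (b : ℂ) (x ξ : V) :
    ‖gaussianWave b x ξ‖ = Real.exp (-(b.re * ‖ξ‖ ^ 2)) := by
  simp [gaussianWave, Complex.norm_exp, mul_re, pow_two]

theorem norm_gaussianWave_le_one {b : ℂ} (hb : 0 ≤ b.re) (x ξ : V) :
    ‖gaussianWave b x ξ‖ ≤ 1 := by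
  rw [norm_gaussianWave, Real.exp_le_one_iff, neg_nonpos]
  positivity

theorem continuous_gaussianWave (x : V) : Continuous fun p : ℂ × V ↦ gaussianWave p.1 x p.2 := by
  unfold gaussianWave
  fun_prop

variable [FiniteDimensional ℝ V] [MeasurableSpace V] [BorelSpace V]

theorem integrable_gaussianWave {b : ℂ} (hb : 0 < b.re) (x : V) :
    Integrable (gaussianWave b x) :=
  GaussianFourier.integrable_cexp_neg_mul_sq_norm_add hb _ x

theorem continuousOn_integral_smul_gaussianWave {h : V → ℂ} (hh : Integrable h) (x : V) :
    ContinuousOn (fun b ↦ ∫ ξ, h ξ • gaussianWave b x ξ) {b | 0 ≤ b.re} := by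
  refine continuousOn_of_dominated (bound := fun ξ ↦ ‖h ξ‖) (fun b _ ↦ ?_) (fun b hb ↦ ?_)
    hh.norm (ae_of_all _ fun ξ ↦ ?_)
  · exact hh.1.smul
      ((continuous_gaussianWave x).comp (Continuous.prodMk_right b)).aestronglyMeasurable
  · filter_upwards with ξ
    rw [norm_smul]
    exact mul_le_of_le_one_right (norm_nonneg _) (norm_gaussianWave_le_one hb x ξ)
  · exact (((continuous_gaussianWave x).comp (Continuous.prodMk_left ξ)).const_smul
      (h ξ)).continuousOn

theorem integral_fourier_smul_eq_integral_smul_fourier {f g : V → ℂ} (hf : Integrable f)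
    (hg : Integrable g) : ∫ ξ, 𝓕 f ξ • g ξ = ∫ y, f y • 𝓕 g y := by
  have h_flip : (innerₗ V).flip = innerₗ V := by
    ext a b
    simp
  have h := VectorFourier.integral_fourierIntegral_smul_eq_flip (L := innerₗ V)
    (μ := volume) Real.continuous_fourierChar continuous_inner hf hg
  rwa [h_flip] at h

theorem norm_fourier_gaussianWave_le {b : ℂ} (hb : 0 < b.re) (x y : V) :
    ‖𝓕 (gaussianWave b x) y‖ ≤ (π / ‖b‖) ^ ((Module.finrank ℝ V : ℝ) / 2) := by
  have h_exp : ‖cexp (-π ^ 2 * ‖x - y‖ ^ 2 / b)‖ ≤ 1 := by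
    have h_inv : 0 ≤ b⁻¹.re := by rw [inv_re]; exact div_nonneg hb.le (normSq_nonneg b)
    rw [Complex.norm_exp, Real.exp_le_one_iff, div_eq_mul_inv]
    norm_cast
    rw [re_ofReal_mul]
    refine mul_nonpos_of_nonpos_of_nonneg ?_ h_inv
    rw [neg_mul, neg_nonpos]
    positivity
  have h_pow : ‖(π / b) ^ (Module.finrank ℝ V / 2 : ℂ)‖ =
      (π / ‖b‖) ^ ((Module.finrank ℝ V : ℝ) / 2) := by
    have : (Module.finrank ℝ V / 2 : ℂ) = ((Module.finrank ℝ V / 2 : ℝ) : ℂ) := by push_cast; rfl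
    rw [this, norm_cpow_real, norm_div, norm_real, Real.norm_of_nonneg pi_pos.le]
  unfold gaussianWave
  rw [fourier_gaussian_innerProductSpace' hb, norm_mul, h_pow]
  exact mul_le_of_le_one_right (by positivity) h_exp

theorem norm_integral_fourier_smul_gaussianWave_le_of_re_pos {f : V → ℂ} (hf : Integrable f)
    {b : ℂ} (hb : 0 < b.re) (x : V) :
    ‖∫ ξ, 𝓕 f ξ • gaussianWave b x ξ‖ ≤
      (π / ‖b‖) ^ ((Module.finrank ℝ V : ℝ) / 2) * ∫ y, ‖f y‖ := by
  rw [integral_fourier_smul_eq_integral_smul_fourier hf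
    (integrable_gaussianWave hb x), ← integral_const_mul]
  refine norm_integral_le_of_norm_le (hf.norm.const_mul _) (ae_of_all _ fun y ↦ ?_)
  rw [norm_smul, mul_comm]
  exact mul_le_mul_of_nonneg_right (norm_fourier_gaussianWave_le hb x y) (norm_nonneg _)

theorem norm_integral_fourier_smul_gaussianWave_le {f : V → ℂ} (hf : Integrable f)
    (hf' : Integrable (𝓕 f)) {b : ℂ} (hb : 0 ≤ b.re) (hb0 : b ≠ 0) (x : V) :
    ‖∫ ξ, 𝓕 f ξ • gaussianWave b x ξ‖ ≤
      (π / ‖b‖) ^ ((Module.finrank ℝ V : ℝ) / 2) * ∫ y, ‖f y‖ := by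
  have h_shift : Tendsto (fun ε : ℝ ↦ b + ε) (𝓝[>] 0) (𝓝[{b | 0 ≤ b.re}] b) := by
    refine tendsto_nhdsWithin_iff.2 ⟨?_, ?_⟩
    · refine tendsto_nhdsWithin_of_tendsto_nhds ?_
      have h_cont : Continuous fun ε : ℝ ↦ b + ε := by fun_prop
      simpa using h_cont.tendsto 0
    · filter_upwards [self_mem_nhdsWithin] with ε (hε : 0 < ε)
      simp only [add_re, ofReal_re]
      linarith
  have h_lhs := ((continuousOn_integral_smul_gaussianWave hf' x) b hb).tendsto.comp h_shift
  have h_rhs : Tendsto (fun ε : ℝ ↦ (π / ‖b + ε‖) ^ ((Module.finrank ℝ V : ℝ) / 2) * ∫ y, ‖f y‖)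
      (𝓝[>] 0) (𝓝 ((π / ‖b‖) ^ ((Module.finrank ℝ V : ℝ) / 2) * ∫ y, ‖f y‖)) := by
    exact ((tendsto_const_nhds.div (h_shift.mono_right nhdsWithin_le_nhds).norm
      (norm_ne_zero_iff.2 hb0)).rpow_const (Or.inr (by positivity))).mul_const _
  refine le_of_tendsto_of_tendsto h_lhs.norm h_rhs ?_
  filter_upwards [self_mem_nhdsWithin] with ε (hε : 0 < ε)
  refine norm_integral_fourier_smul_gaussianWave_le_of_re_pos hf ?_ x
  simp only [add_re, ofReal_re]
  linarith

end GaussianWave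

theorem freeProp_eq_integral_fourier_smul_gaussianWave {d : ℕ} (t : ℝ) (f : Ed d → ℂ)
    (x : Ed d) :
    freeProp t f x = ∫ ξ, 𝓕 f ξ • gaussianWave ((4 * π ^ 2 * t : ℝ) * I) x ξ := by
  rw [freeProp, Real.fourierInv_eq']
  congr 1 with ξ
  rw [smul_eq_mul, smul_eq_mul, ← mul_assoc, ← Complex.exp_add, mul_comm, gaussianWave,
    real_inner_comm]
  congr 2
  push_cast
  ring

theorem freeProp_dispersive_general
    (d : ℕ) (t : ℝ) (ht : t ≠ 0) (f : SchwartzMap (Ed d) ℂ) :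
    ∀ x : Ed d, ‖freeProp t (⇑f) x‖ ≤
      (4 * π * |t|) ^ (-(d : ℝ) / 2) * ∫ y : Ed d, ‖f y‖ := by
  intro x
  have h_norm : ‖((4 * π ^ 2 * t : ℝ) : ℂ) * I‖ = π * (4 * π * |t|) := by
    rw [norm_mul, norm_I, mul_one, norm_real, Real.norm_eq_abs, abs_mul,
      abs_of_pos (by positivity)]
    ring
  have h_ne : ((4 * π ^ 2 * t : ℝ) : ℂ) * I ≠ 0 := by
    rw [← norm_ne_zero_iff, h_norm]
    positivity
  have h_re : 0 ≤ (((4 * π ^ 2 * t : ℝ) : ℂ) * I).re := by rw [re_ofReal_mul, I_re, mul_zero]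
  rw [freeProp_eq_integral_fourier_smul_gaussianWave]
  refine (norm_integral_fourier_smul_gaussianWave_le f.integrable (𝓕 f).integrable h_re h_ne
    x).trans_eq ?_
  rw [h_norm, div_mul_cancel_left₀ pi_ne_zero, finrank_euclideanSpace_fin, neg_div,
    Real.rpow_neg_eq_inv_rpow]

/-- **Dispersive estimate:** for `t ≠ 0` and Schwartz `f`,
`‖e^{itΔ}f‖_{L^∞} ≤ (4π|t|)^{-d/2} ‖f‖_{L¹}`. -/
theorem freeProp_dispersive
    (d : ℕ) (hd : 1 ≤ d) (t : ℝ) (ht : t ≠ 0) (f : SchwartzMap (Ed d) ℂ) :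
    ∀ x : Ed d, ‖freeProp t (⇑f) x‖ ≤
      (4 * π * |t|) ^ (-(d : ℝ) / 2) * ∫ y : Ed d, ‖f y‖ :=
  freeProp_dispersive_general d t ht f
end
end
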